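/- arXiv:2203.06660 — 2 statements merged into one kernel-verified Lean document; each statement's English description precedes it below -/
import Mathlib

section
/- Let I be any instance of HRT-MSLQ with n residents, where each hospital h has lower quota ℓ(h) ≤ n. Then for any two stable matchings N and M of I with s(M) > 0, s(N)/s(M) ≤ n + 1. -/
/-- An instance of the Hospitals/Residents problem with ties, incomplete lists,
and lower/upper quotas (HRT-MSLQ).  Preferences are given by rank functions
(smaller rank = more preferred); ties are allowed (equal ranks). -/
structure HRTInstance (R H : Type) [Fintype R] [DecidableEq R] [Fintype H] [DecidableEq H] where
  acc : R → H → Prop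
  rRank : R → H → ℕ
  hRank : H → R → ℕ
  lq : H → ℕ
  uq : H → ℕ

namespace HRTInstance

variable {R H : Type} [Fintype R] [DecidableEq R] [Fintype H] [DecidableEq H]

/-- The set of residents assigned to hospital `h` by assignment `M`. -/
def assignees (M : R → Option H) (h : H) : Finset R :=
  Finset.univ.filter (fun r => M r = some h)

/-- `M` is a matching: it respects acceptability and upper quotas. -/
def IsMatching (I : HRTInstance R H) (M : R → Option H) : Prop :=
  (∀ r h, M r = some h → I.acc r h) ∧ ∀ h, (assignees M h).card ≤ I.uq h

/-- `(r, h)` is a blocking pair for `M`. -/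
def Blocks (I : HRTInstance R H) (M : R → Option H) (r : R) (h : H) : Prop :=
  I.acc r h ∧
  (M r = none ∨ ∃ h', M r = some h' ∧ I.rRank r h < I.rRank r h') ∧
  ((assignees M h).card < I.uq h ∨ ∃ r' ∈ assignees M h, I.hRank h r < I.hRank h r')

/-- `M` is a stable matching. -/
def IsStable (I : HRTInstance R H) (M : R → Option H) : Prop :=
  I.IsMatching M ∧ ∀ r h, ¬ I.Blocks M r h

/-- The total satisfaction ratio (score) of `M`:
`s(M) = Σ_h min{1, |M(h)|/ℓ(h)}`, with score `1` when `ℓ(h) = 0`. -/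
def score (I : HRTInstance R H) (M : R → Option H) : ℚ :=
  ∑ h, if I.lq h = 0 then 1
       else min 1 (((assignees M h).card : ℚ) / (I.lq h : ℚ))

end HRTInstance

/-!
Let `H₀` be the hospitals with lower quota `0`; each contributes `1` to every score. If `H₀` is
nonempty, then `s(M) ≥ |H₀| ≥ 1` while `s(N) ≤ |H₀| + n`. Otherwise `s(N)` is at most the number
of residents matched by `N`. If one of them, assigned to `h` by `N`, is unmatched in `M`, stability
of `M` forces `h` to be full in `M`, so `s(M) ≥ 1 ≥ s(N) / n`. If not, `N` matches no more
residents than `M`, and since `ℓ(h) ≤ n` every resident matched by `M` contributes at least `1/n`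
to `s(M)`.
-/

namespace HRTInstance

variable {R H : Type} [Fintype R] [DecidableEq R] [Fintype H] [DecidableEq H]

def matched (M : R → Option H) : Finset R :=
  Finset.univ.filter fun r => M r ≠ none

lemma biUnion_assignees (M : R → Option H) :
    Finset.univ.biUnion (assignees M) = matched M := by
  ext r
  simp only [Finset.mem_biUnion, assignees, matched, Finset.mem_filter, Finset.mem_univ, true_and]
  exact Option.ne_none_iff_exists'.symm

lemma sum_card_assignees (M : R → Option H) :
    ∑ h, (assignees M h).card = (matched M).card := by
  rw [← biUnion_assignees, Finset.card_biUnion]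
  intro h₁ _ h₂ _ hne
  simp only [Finset.disjoint_left, assignees, Finset.mem_filter]
  rintro r ⟨-, hr₁⟩ ⟨-, hr₂⟩
  exact hne (Option.some.inj (hr₁.symm.trans hr₂))

def hospitalScore (I : HRTInstance R H) (M : R → Option H) (h : H) : ℚ :=
  if I.lq h = 0 then 1 else min 1 (((assignees M h).card : ℚ) / (I.lq h : ℚ))

variable (I : HRTInstance R H) (M : R → Option H)

lemma score_eq_sum_hospitalScore : I.score M = ∑ h, I.hospitalScore M h := rfl

lemma hospitalScore_nonneg (h : H) : 0 ≤ I.hospitalScore M h := by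
  unfold hospitalScore
  split_ifs
  · exact zero_le_one
  · exact le_min zero_le_one (by positivity)

lemma hospitalScore_le_score (h : H) : I.hospitalScore M h ≤ I.score M :=
  Finset.single_le_sum (fun h _ => I.hospitalScore_nonneg M h) (Finset.mem_univ h)

lemma score_nonneg : 0 ≤ I.score M :=
  Finset.sum_nonneg fun h _ => I.hospitalScore_nonneg M h

lemma hospitalScore_le_card_assignees {h : H} (hl : I.lq h ≠ 0) :
    I.hospitalScore M h ≤ (assignees M h).card := by
  have hl₁ : (1 : ℚ) ≤ I.lq h := by exact_mod_cast Nat.one_le_iff_ne_zero.mpr hl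
  simp only [hospitalScore, hl, if_false]
  exact (min_le_right _ _).trans (div_le_self (by positivity) hl₁)

lemma hospitalScore_eq_one_of_lq_le_card {h : H} (hl : I.lq h ≤ (assignees M h).card) :
    I.hospitalScore M h = 1 := by
  unfold hospitalScore
  split_ifs with hl₀
  · rfl
  · have hl₁ : (0 : ℚ) < I.lq h := by exact_mod_cast Nat.pos_of_ne_zero hl₀
    exact min_eq_left ((one_le_div hl₁).mpr (by exact_mod_cast hl))

lemma card_assignees_le_mul_hospitalScore {h : H} (hl : I.lq h ≤ Fintype.card R) :
    ((assignees M h).card : ℚ) ≤ Fintype.card R * I.hospitalScore M h := by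
  have hc : ((assignees M h).card : ℚ) ≤ Fintype.card R := by
    exact_mod_cast Finset.card_le_univ _
  unfold hospitalScore
  split_ifs with hl₀
  · simpa using hc
  · have hl₁ : (0 : ℚ) < I.lq h := by exact_mod_cast Nat.pos_of_ne_zero hl₀
    have hn : (0 : ℚ) < Fintype.card R := hl₁.trans_le (by exact_mod_cast hl)
    rw [← div_le_iff₀' hn]
    exact le_min ((div_le_one hn).mpr hc)
      (div_le_div_of_nonneg_left (by positivity) hl₁ (by exact_mod_cast hl))

lemma card_lq_eq_zero_le_score :
    ((Finset.univ.filter fun h => I.lq h = 0).card : ℚ) ≤ I.score M := by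
  rw [← Finset.sum_boole, score_eq_sum_hospitalScore]
  refine Finset.sum_le_sum fun h _ => ?_
  split_ifs with hl
  · simp [hospitalScore, hl]
  · exact I.hospitalScore_nonneg M h

lemma score_le_card_lq_eq_zero_add_card_matched :
    I.score M ≤ (Finset.univ.filter fun h => I.lq h = 0).card + (matched M).card := by
  rw [← sum_card_assignees, ← Finset.sum_boole, score_eq_sum_hospitalScore]
  push_cast
  rw [← Finset.sum_add_distrib]
  refine Finset.sum_le_sum fun h _ => ?_
  by_cases hl : I.lq h = 0
  · simp only [hospitalScore, hl, if_true]
    linarith [(assignees M h).card.cast_nonneg (α := ℚ)]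
  · simpa [hl] using I.hospitalScore_le_card_assignees M hl

lemma score_le_card_matched (hl : ∀ h, I.lq h ≠ 0) : I.score M ≤ (matched M).card := by
  simpa [hl] using I.score_le_card_lq_eq_zero_add_card_matched M

lemma card_matched_le_mul_score (hl : ∀ h, I.lq h ≤ Fintype.card R) :
    ((matched M).card : ℚ) ≤ Fintype.card R * I.score M := by
  rw [← sum_card_assignees, score_eq_sum_hospitalScore, Finset.mul_sum]
  push_cast
  exact Finset.sum_le_sum fun h _ => I.card_assignees_le_mul_hospitalScore M (hl h)

variable {I M}

lemma IsStable.uq_le_card_assignees (hM : I.IsStable M) {r : R} {h : H} (hacc : I.acc r h)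
    (hr : M r = none) : I.uq h ≤ (assignees M h).card := by
  by_contra! hlt
  exact hM.2 r h ⟨hacc, Or.inl hr, Or.inl hlt⟩

lemma IsStable.one_le_score (hM : I.IsStable M) (hlu : ∀ h, I.lq h ≤ I.uq h) {r : R} {h : H}
    (hacc : I.acc r h) (hr : M r = none) : 1 ≤ I.score M := by
  have hone : I.hospitalScore M h = 1 :=
    I.hospitalScore_eq_one_of_lq_le_card M ((hlu h).trans (hM.uq_le_card_assignees hacc hr))
  exact hone ▸ I.hospitalScore_le_score M h

end HRTInstance

open HRTInstance in
/-- General model with `n` residents, `ℓ(h) ≤ u(h) ≤ n` for all hospitals: for any two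
stable matchings `N` and `M` with `s(M) > 0`, `s(N)/s(M) ≤ n + 1`. -/
theorem stmt_5 {R H : Type} [Fintype R] [DecidableEq R] [Fintype H] [DecidableEq H]
    (I : HRTInstance R H)
    (hlu : ∀ h, I.lq h ≤ I.uq h) (hun : ∀ h, I.uq h ≤ Fintype.card R)
    (N M : R → Option H) (hN : I.IsStable N) (hM : I.IsStable M)
    (hpos : 0 < I.score M) :
    I.score N / I.score M ≤ (Fintype.card R : ℚ) + 1 := by
  rw [div_le_iff₀ hpos]
  have hNn : ((matched N).card : ℚ) ≤ Fintype.card R := by exact_mod_cast Finset.card_le_univ _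
  by_cases hH₀ : ∃ h, I.lq h = 0
  · obtain ⟨h₀, hh₀⟩ := hH₀
    have hk : (1 : ℚ) ≤ (Finset.univ.filter fun h => I.lq h = 0).card := by
      exact_mod_cast Finset.card_pos.mpr ⟨h₀, by simp [hh₀]⟩
    have hN' := I.score_le_card_lq_eq_zero_add_card_matched N
    have hM' := I.card_lq_eq_zero_le_score M
    nlinarith
  push Not at hH₀
  have hN' := I.score_le_card_matched N hH₀
  by_cases hlost : ∃ r h, N r = some h ∧ M r = none
  · obtain ⟨r, h, hNr, hMr⟩ := hlost
    have hM₁ := hM.one_le_score hlu (hN.1.1 r h hNr) hMr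
    nlinarith
  · push Not at hlost
    have hsub : matched N ⊆ matched M := fun r hr => by
      simp only [matched, Finset.mem_filter, Finset.mem_univ, true_and] at hr ⊢
      obtain ⟨h, hNr⟩ := Option.ne_none_iff_exists'.mp hr
      exact hlost r h hNr
    have hNM : ((matched N).card : ℚ) ≤ (matched M).card := by
      exact_mod_cast Finset.card_le_card hsub
    have hM' := I.card_matched_le_mul_score M fun h => (hlu h).trans (hun h)
    nlinarith [I.score_nonneg M]
end

section
/- Consider the uniform HRT-MSLQ instance with quotas [ℓ,u] (1 ≤ ℓ ≤ u) on all hospitals: residents a_1..a_u, b_1..b_u, c_1..c_u; hospitals h_1..h_u, x, y; a_i prefers x to h_i; b_i prefers x to y; c_i accepts only y; h_i accepts only a_i; x is indifferent among all a's and b's; y strictly prefers every b to every c. Then M = {(a_i,x)} ∪ {(b_i,y)} and N = {(a_i,h_i)} ∪ {(b_i,x)} ∪ {(c_i,y)} are both stable, with s(M) = 2 and s(N) = u/ℓ + 2. Hence s(N)/s(M) ≥ θ/2 + 1 where θ = u/ℓ. -/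
/-- Residents `a_i = .inl i`, `b_i = .inr (.inl i)`, `c_i = .inr (.inr i)`;
hospitals `h_i = .inl i`, `x = .inr 0`, `y = .inr 1`, all with quotas `[ℓ,u]`.
`a_i` prefers `x` to `h_i`; `b_i` prefers `x` to `y`; `c_i` accepts only `y`;
`h_i` accepts only `a_i`; `x` is indifferent among all `a`'s and `b`'s;
`y` strictly prefers every `b` to every `c`. -/
def I17 (l u : ℕ) : HRTInstance (Fin u ⊕ (Fin u ⊕ Fin u)) (Fin u ⊕ Fin 2) where
  acc r h := match r, h with
    | .inl i, .inl j => i = j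
    | .inl _, .inr k => k = 0
    | .inr (.inl _), .inr _ => True
    | .inr (.inl _), .inl _ => False
    | .inr (.inr _), .inr k => k = 1
    | .inr (.inr _), .inl _ => False
  rRank _ h := match h with
    | .inl _ => 1
    | .inr k => k.val
  hRank _ r := match r with
    | .inr (.inr _) => 1
    | _ => 0
  lq _ := l
  uq _ := u

def M17 (u : ℕ) : (Fin u ⊕ (Fin u ⊕ Fin u)) → Option (Fin u ⊕ Fin 2)
  | .inl _ => some (.inr 0)
  | .inr (.inl _) => some (.inr 1)
  | .inr (.inr _) => none

def N17 (u : ℕ) : (Fin u ⊕ (Fin u ⊕ Fin u)) → Option (Fin u ⊕ Fin 2)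
  | .inl i => some (.inl i)
  | .inr (.inl _) => some (.inr 0)
  | .inr (.inr _) => some (.inr 1)

/-!
A pair `(r, h)` cannot block when `h` is unacceptable to `r`, when `r` already holds a hospital it
ranks at least as high as `h`, or when `h` is full of residents it ranks at least as high as `r`;
every pair of the instance falls under one of these for both `M` and `N`. For `N` it is the tie
at `x` that matters: `x` is full of `b`'s and does not rank any `a_i` above them.
-/

namespace HRTInstance

@[simp]
lemma mem_assignees {R H : Type} [Fintype R] [DecidableEq H] {M : R → Option H} {h : H} {r : R} :
    r ∈ assignees M h ↔ M r = some h := by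
  simp [assignees]

variable {R H : Type} [Fintype R] [DecidableEq R] [Fintype H] [DecidableEq H]
  {I : HRTInstance R H} {M : R → Option H} {r : R} {h : H}

lemma score_eq_sum_min {l : ℕ} (hl : l ≠ 0) (hlq : ∀ h, I.lq h = l) :
    I.score M = ∑ h, min 1 (((assignees M h).card : ℚ) / l) := by
  simp [score, hlq, hl]

lemma not_blocks_of_not_acc (hacc : ¬ I.acc r h) : ¬ I.Blocks M r h :=
  fun hb => hacc hb.1

lemma not_blocks_of_rRank_le {h' : H} (hM : M r = some h') (hle : I.rRank r h' ≤ I.rRank r h) :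
    ¬ I.Blocks M r h := by
  rintro ⟨-, hnone | ⟨h'', hM', hlt⟩, -⟩
  · simp [hM] at hnone
  · rw [hM, Option.some.injEq] at hM'
    subst hM'
    omega

lemma not_blocks_of_full (hfull : I.uq h ≤ (assignees M h).card)
    (hworse : ∀ r' ∈ assignees M h, I.hRank h r' ≤ I.hRank h r) : ¬ I.Blocks M r h := by
  rintro ⟨-, -, hcard | ⟨r', hr', hlt⟩⟩
  · omega
  · exact absurd (hworse r' hr') (not_le.mpr hlt)

end HRTInstance

lemma min_one_div_eq_one {a b : ℕ} (hb : b ≠ 0) (hba : b ≤ a) : min (1 : ℚ) (a / b) = 1 :=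
  min_eq_left ((one_le_div₀ (by positivity)).2 (by exact_mod_cast hba))

open HRTInstance

section Instance17

variable (l u : ℕ)

lemma card_assignees_M17_inl (j : Fin u) : (assignees (M17 u) (.inl j)).card = 0 := by
  rw [assignees, Finset.card_filter, Fintype.sum_sum_type, Fintype.sum_sum_type]
  simp [M17]

lemma card_assignees_M17_inr (k : Fin 2) : (assignees (M17 u) (.inr k)).card = u := by
  fin_cases k <;>
  · rw [assignees, Finset.card_filter, Fintype.sum_sum_type, Fintype.sum_sum_type]
    simp [M17]

lemma card_assignees_N17_inl (j : Fin u) : (assignees (N17 u) (.inl j)).card = 1 := by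
  rw [assignees, Finset.card_filter, Fintype.sum_sum_type, Fintype.sum_sum_type]
  simp [N17]

lemma card_assignees_N17_inr (k : Fin 2) : (assignees (N17 u) (.inr k)).card = u := by
  fin_cases k <;>
  · rw [assignees, Finset.card_filter, Fintype.sum_sum_type, Fintype.sum_sum_type]
    simp [N17]

variable {l u}

lemma isMatching_M17 : (I17 l u).IsMatching (M17 u) := by
  refine ⟨?_, ?_⟩
  · rintro (i | i | i) (j | k) hM <;> simp_all [M17, I17]
  · rintro (j | k) <;> simp [card_assignees_M17_inl, card_assignees_M17_inr, I17]

lemma isMatching_N17 : (I17 l u).IsMatching (N17 u) := by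
  refine ⟨?_, ?_⟩
  · rintro (i | i | i) (j | k) hM <;> simp_all [N17, I17]
  · rintro (j | k)
    · simp only [card_assignees_N17_inl, I17]
      exact Fin.pos j
    · simp [card_assignees_N17_inr, I17]

lemma isStable_M17 : (I17 l u).IsStable (M17 u) := by
  refine ⟨isMatching_M17, ?_⟩
  rintro (i | i | i) (j | k)
  · exact not_blocks_of_rRank_le rfl (by simp [I17])
  · exact not_blocks_of_rRank_le rfl (by simp [I17])
  · exact not_blocks_of_not_acc (by simp [I17])
  · fin_cases k
    · refine not_blocks_of_full (by simp [card_assignees_M17_inr, I17]) ?_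
      rintro (_ | _ | _) hr <;> simp_all [M17, I17]
    · exact not_blocks_of_rRank_le rfl le_rfl
  · exact not_blocks_of_not_acc (by simp [I17])
  · fin_cases k
    · exact not_blocks_of_not_acc (by simp [I17])
    · refine not_blocks_of_full (by simp [card_assignees_M17_inr, I17]) ?_
      rintro (_ | _ | _) hr <;> simp [I17]

lemma isStable_N17 : (I17 l u).IsStable (N17 u) := by
  refine ⟨isMatching_N17, ?_⟩
  rintro (i | i | i) (j | k)
  · exact not_blocks_of_rRank_le rfl le_rfl
  · fin_cases k
    · refine not_blocks_of_full (by simp [card_assignees_N17_inr, I17]) ?_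
      rintro (_ | _ | _) hr <;> simp_all [N17, I17]
    · exact not_blocks_of_not_acc (by simp [I17])
  · exact not_blocks_of_not_acc (by simp [I17])
  · exact not_blocks_of_rRank_le rfl (by simp [I17])
  · exact not_blocks_of_not_acc (by simp [I17])
  · fin_cases k
    · exact not_blocks_of_not_acc (by simp [I17])
    · exact not_blocks_of_rRank_le rfl le_rfl

lemma score_M17 (hl : l ≠ 0) (hlu : l ≤ u) : (I17 l u).score (M17 u) = 2 := by
  rw [score_eq_sum_min hl (fun _ => rfl), Fintype.sum_sum_type]
  simp [card_assignees_M17_inl, card_assignees_M17_inr, min_one_div_eq_one hl hlu]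

lemma score_N17 (hl : 1 ≤ l) (hlu : l ≤ u) : (I17 l u).score (N17 u) = u / l + 2 := by
  have hinv : min (1 : ℚ) (l : ℚ)⁻¹ = (l : ℚ)⁻¹ :=
    min_eq_right ((inv_le_one₀ (by positivity)).2 (by exact_mod_cast hl))
  rw [score_eq_sum_min (by omega) (fun _ => rfl), Fintype.sum_sum_type]
  simp [card_assignees_N17_inl, card_assignees_N17_inr, min_one_div_eq_one (by omega) hlu, hinv]
  exact (div_eq_mul_inv _ _).symm

end Instance17

/-- `M = {(a_i,x)} ∪ {(b_i,y)}` and `N = {(a_i,h_i)} ∪ {(b_i,x)} ∪ {(c_i,y)}` are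
both stable, with `s(M) = 2` and `s(N) = u/ℓ + 2`; hence `s(N)/s(M) ≥ θ/2 + 1`. -/
theorem stmt_17 (l u : ℕ) (hl : 1 ≤ l) (hlu : l ≤ u) :
    (I17 l u).IsStable (M17 u) ∧ (I17 l u).IsStable (N17 u) ∧
    (I17 l u).score (M17 u) = 2 ∧
    (I17 l u).score (N17 u) = (u : ℚ) / (l : ℚ) + 2 ∧
    (u : ℚ) / (l : ℚ) / 2 + 1 ≤ (I17 l u).score (N17 u) / (I17 l u).score (M17 u) := by
  have hM := score_M17 (by omega) hlu
  have hN := score_N17 hl hlu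
  refine ⟨isStable_M17, isStable_N17, hM, hN, ?_⟩
  rw [hM, hN]
  linarith
end
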